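/- If C is a Z₂Z₄[ξ]-linear code of type (r,s;k₀;k₁,k₂), where ξ is a root of an irreducible polynomial of degree t, then C has exactly 2^{t(k₀ + 2k₁ + k₂)} codewords. -/

import Mathlib

set_option synthInstance.maxHeartbeats 1000000
set_option maxHeartbeats 2000000

noncomputable section
open Polynomial

abbrev Z4 : Type := ZMod 4
abbrev Z2 : Type := ZMod 2

/-- The mod 2 reduction map `Z₄ → Z₂`. -/
def bar : Z4 →+* Z2 := ZMod.castHom (m := 2) (by norm_num) Z2

/-- The ring `R₄ = Z₄[x]/⟨h⟩` (for `h` basic primitive, the Galois ring `GR(4,m)`). -/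
abbrev R4 (h : Z4[X]) : Type := Z4[X] ⧸ Ideal.span {h}

/-- The ring `R₂ = Z₂[x]/⟨h̄⟩` (for `h` basic primitive, the field `F_{2^m}`). -/
abbrev R2 (h : Z4[X]) : Type := Z2[X] ⧸ Ideal.span {h.map bar}

/-- `ξ`, the class of `x` in `R₄`. -/
def xi (h : Z4[X]) : R4 h := Ideal.Quotient.mk _ X

/-- `ξ̄`, the class of `x` in `R₂`. -/
def xibar (h : Z4[X]) : R2 h := Ideal.Quotient.mk _ X

/-- The coefficientwise mod 2 reduction `R₄ → R₂`. -/
def barR (h : Z4[X]) : R4 h →+* R2 h :=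
  Ideal.quotientMap (Ideal.span {h.map bar}) (Polynomial.mapRingHom bar)
    (by
      rw [Ideal.span_le]
      intro p hp
      simp only [Set.mem_singleton_iff] at hp
      subst hp
      exact Ideal.mem_comap.mpr (Ideal.subset_span (by simp)))

/-- The canonical representative (of degree `< deg h`) of an element of `R₄`. -/
def rep4 (h : Z4[X]) (α : R4 h) : Z4[X] := Quotient.out α %ₘ h

/-- The canonical representative (of degree `< deg h̄`) of an element of `R₂`. -/
def rep2 (h : Z4[X]) (α : R2 h) : Z2[X] := Quotient.out α %ₘ (h.map bar)

/-- The Frobenius map `θ₄ : ∑ vᵢ ξ^i ↦ ∑ vᵢ ξ^{2i}` of `R₄`, as a bare function: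
substitute `ξ²` in the canonical representative. -/
def thetaFun4 (h : Z4[X]) (α : R4 h) : R4 h := Polynomial.aeval (xi h ^ 2) (rep4 h α)

/-- The Frobenius map `θ₂ : ∑ vᵢ ξ̄^i ↦ ∑ vᵢ ξ̄^{2i}` of `R₂`, as a bare function. -/
def thetaFun2 (h : Z4[X]) (α : R2 h) : R2 h := Polynomial.aeval (xibar h ^ 2) (rep2 h α)

/-- A lift `ι : R₂ → R₄` with `ι` mod 2 the identity: lift the coefficients of the
canonical representative from `{0,1}`. -/
def iota (h : Z4[X]) (α : R2 h) : R4 h :=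
  Ideal.Quotient.mk _ ((rep2 h α).sum fun i a => C ((a.val : Z4)) * X ^ i)

/-- `h` is a monic basic primitive polynomial of degree `m`:  `h` is monic, its mod 2
reduction `h̄` is irreducible over `Z₂`, and the root `ξ̄` of `h̄` is a primitive
element, i.e. has multiplicative order `2^m - 1`. -/
def BasicPrimitive (h : Z4[X]) (m : ℕ) : Prop :=
  h.Monic ∧ h.natDegree = m ∧ Irreducible (h.map bar) ∧ orderOf (xibar h) = 2 ^ m - 1

/-- The scalar multiplication `γ * (α,β) = (γ̄α, γβ)` making `R₂^r × R₄^s` (or any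
mixed-alphabet tuple space) an `R₄`-module. -/
def smulStar (h : Z4[X]) {α β : Type*} (γ : R4 h) (v : (α → R2 h) × (β → R4 h)) :
    (α → R2 h) × (β → R4 h) :=
  (fun i => barR h γ * v.1 i, fun j => γ * v.2 j)


/-- A `Z₂Z₄[ξ]`-linear code: an `R₄`-submodule of `R₂^r × R₄^s` (as a set). -/
def IsZ2Z4Linear (h : Z4[X]) {r s : ℕ} (C : Set ((Fin r → R2 h) × (Fin s → R4 h))) : Prop :=
  0 ∈ C ∧ (∀ u ∈ C, ∀ v ∈ C, u + v ∈ C) ∧ ∀ γ : R4 h, ∀ u ∈ C, smulStar h γ u ∈ C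

/-! ### Standard generator and parity-check matrices -/

/-- The set of all `R₄`-linear combinations (via the action `*`) of a finite family of
rows in `R₂^α × R₄^β`. -/
def rowSpan (h : Z4[X]) {ι α β : Type*} [Fintype ι]
    (rows : ι → (α → R2 h) × (β → R4 h)) : Set ((α → R2 h) × (β → R4 h)) :=
  {v | ∃ c : ι → R4 h, v = ∑ i, smulStar h (c i) (rows i)}

/-- The rows of the standard form generator matrix
`G = [[I_{k₀}, Ā₀₁ | 0, 0, 2T], [0, S | I_{k₁}, A₀₁, A₀₂], [0, 0 | 0, 2I_{k₂}, 2A₁₂]]`. -/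
def stdGenRows (h : Z4[X]) {r s k0 k1 k2 : ℕ}
    (A01b : Matrix (Fin k0) (Fin (r - k0)) (R2 h))
    (S : Matrix (Fin k1) (Fin (r - k0)) (R2 h))
    (T : Matrix (Fin k0) (Fin (s - k1 - k2)) (R4 h))
    (A01 : Matrix (Fin k1) (Fin k2) (R4 h))
    (A02 : Matrix (Fin k1) (Fin (s - k1 - k2)) (R4 h))
    (A12 : Matrix (Fin k2) (Fin (s - k1 - k2)) (R4 h)) :
    (Fin k0 ⊕ Fin k1 ⊕ Fin k2) →
      ((Fin k0 ⊕ Fin (r - k0)) → R2 h) × ((Fin k1 ⊕ Fin k2 ⊕ Fin (s - k1 - k2)) → R4 h) :=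
  fun row =>
    (fun col =>
      match row, col with
      | .inl i, .inl j => if i = j then 1 else 0
      | .inl i, .inr j => A01b i j
      | .inr (.inl i), .inr j => S i j
      | _, _ => 0,
     fun col =>
      match row, col with
      | .inl i, .inr (.inr j) => 2 * T i j
      | .inr (.inl i), .inl j => if i = j then 1 else 0
      | .inr (.inl i), .inr (.inl j) => A01 i j
      | .inr (.inl i), .inr (.inr j) => A02 i j
      | .inr (.inr i), .inr (.inl j) => if i = j then 2 else 0
      | .inr (.inr i), .inr (.inr j) => 2 * A12 i j
      | _, _ => 0)

/-- `C` is (permutation equivalent to) a code of type `(r,s;k₀;k₁,k₂)`:  after a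
permutation of the first `r` and of the last `s` coordinates (encoded by the
relabelings `e2`, `e4`) the code is exactly the `R₄`-span of the rows of the standard
form generator matrix. -/
def IsTypeCode (h : Z4[X]) (r s k0 k1 k2 : ℕ)
    (C : Set ((Fin r → R2 h) × (Fin s → R4 h))) : Prop :=
  ∃ (A01b : Matrix (Fin k0) (Fin (r - k0)) (R2 h))
    (S : Matrix (Fin k1) (Fin (r - k0)) (R2 h))
    (T : Matrix (Fin k0) (Fin (s - k1 - k2)) (R4 h))
    (A01 : Matrix (Fin k1) (Fin k2) (R4 h))
    (A02 : Matrix (Fin k1) (Fin (s - k1 - k2)) (R4 h))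
    (A12 : Matrix (Fin k2) (Fin (s - k1 - k2)) (R4 h))
    (e2 : Fin r ≃ (Fin k0 ⊕ Fin (r - k0)))
    (e4 : Fin s ≃ (Fin k1 ⊕ Fin k2 ⊕ Fin (s - k1 - k2))),
    (fun v : (Fin r → R2 h) × (Fin s → R4 h) => (v.1 ∘ e2.symm, v.2 ∘ e4.symm)) '' C
      = rowSpan h (stdGenRows h A01b S T A01 A02 A12)

/-- The inner product
`⟨u,v⟩ = 2 ∑ᵢ ι(aᵢdᵢ) + ∑ⱼ bⱼeⱼ ∈ R₄` on `R₂^α × R₄^β`. -/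
def innerP (h : Z4[X]) {α β : Type*} [Fintype α] [Fintype β]
    (u v : (α → R2 h) × (β → R4 h)) : R4 h :=
  2 * ∑ i, iota h (u.1 i * v.1 i) + ∑ j, u.2 j * v.2 j

/-- The dual code `C⊥ = {v : ⟨u,v⟩ = 0 for all u ∈ C}`. -/
def dualCode (h : Z4[X]) {α β : Type*} [Fintype α] [Fintype β]
    (C : Set ((α → R2 h) × (β → R4 h))) : Set ((α → R2 h) × (β → R4 h)) :=
  {v | ∀ u ∈ C, innerP h u v = 0}

/-- The rows of the standard form parity-check matrix
`H = [[−Ā₀₁ᵀ, I_{r−k₀} | −2Sᵀ, 0, 0], [−Tᵀ, 0 | −A₀₂ᵀ + A₁₂ᵀA₀₁ᵀ, −A₁₂ᵀ, I_{s−k₁−k₂}],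
[0, 0 | −2A₀₁ᵀ, 2I_{k₂}, 0]]`. -/
def stdParityRows (h : Z4[X]) {r s k0 k1 k2 : ℕ}
    (A01b : Matrix (Fin k0) (Fin (r - k0)) (R2 h))
    (S : Matrix (Fin k1) (Fin (r - k0)) (R2 h))
    (T : Matrix (Fin k0) (Fin (s - k1 - k2)) (R4 h))
    (A01 : Matrix (Fin k1) (Fin k2) (R4 h))
    (A02 : Matrix (Fin k1) (Fin (s - k1 - k2)) (R4 h))
    (A12 : Matrix (Fin k2) (Fin (s - k1 - k2)) (R4 h)) :
    (Fin (r - k0) ⊕ Fin (s - k1 - k2) ⊕ Fin k2) →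
      ((Fin k0 ⊕ Fin (r - k0)) → R2 h) × ((Fin k1 ⊕ Fin k2 ⊕ Fin (s - k1 - k2)) → R4 h) :=
  fun row =>
    (fun col =>
      match row, col with
      | .inl i, .inl j => -(A01b j i)
      | .inl i, .inr j => if i = j then 1 else 0
      | .inr (.inl i), .inl j => -(barR h (T j i))
      | _, _ => 0,
     fun col =>
      match row, col with
      | .inl i, .inl j => -(2 * iota h (S j i))
      | .inr (.inl i), .inl j => -(A02 j i) + ∑ c, A12 c i * A01 j c
      | .inr (.inl i), .inr (.inl j) => -(A12 j i)
      | .inr (.inl i), .inr (.inr j) => if i = j then 1 else 0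
      | .inr (.inr i), .inl j => -(2 * A01 j i)
      | .inr (.inr i), .inr (.inl j) => if i = j then 2 else 0
      | _, _ => 0)

/-!
Up to the coordinate permutation, `C` is the image of the additive map `c ↦ c * G` on
`R₄^(k₀+k₁+k₂)`, so `|C| · |ker| = |R₄|^(k₀+k₁+k₂)`. The identity columns of `G` show that
`c * G = 0` forces `c₁ = 0` and `c̄₀ = c̄₂ = 0`; conversely such a `c` kills every row, because in
`R₄` the conditions `β̄ = 0` and `2β = 0` coincide and the `R₄`-entries of the first and third
row blocks are multiples of `2`. As `|R₄| = 4^t` and reduction `R₄ → R₂` is onto with `|R₂| = 2^t`,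
the kernel of reduction has `2^t` elements, whence `|C| = 4^{t(k₀+k₁+k₂)} / 2^{t(k₀+k₂)}`.
-/

namespace Polynomial

theorem Monic.dvd_iff_eq_zero_of_degree_lt {R : Type*} [CommRing R] [Nontrivial R]
    {p q : R[X]} (hq : q.Monic) (hp : p.degree < q.degree) : q ∣ p ↔ p = 0 := by
  rw [← modByMonic_eq_zero_iff_dvd hq, (modByMonic_eq_self_iff hq).mpr hp]

end Polynomial

section GaloisRing

variable {h : Z4[X]}

instance : Nontrivial Z4 := ZMod.nontrivial_iff.mpr (by decide)

theorem bar_eq_zero_iff_add_self_eq_zero (a : Z4) : bar a = 0 ↔ a + a = 0 := by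
  revert a; decide

theorem map_bar_eq_zero_iff_add_self_eq_zero (p : Z4[X]) : p.map bar = 0 ↔ p + p = 0 := by
  simp only [Polynomial.ext_iff, coeff_map, coeff_zero, coeff_add,
    bar_eq_zero_iff_add_self_eq_zero]

theorem barR_mk (p : Z4[X]) : barR h (Ideal.Quotient.mk _ p) = Ideal.Quotient.mk _ (p.map bar) :=
  rfl

theorem barR_surjective : Function.Surjective (barR h) := by
  intro y
  obtain ⟨q, rfl⟩ := Ideal.Quotient.mk_surjective y
  obtain ⟨p, rfl⟩ := Polynomial.map_surjective bar (ZMod.ringHom_surjective bar) q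
  exact ⟨Ideal.Quotient.mk _ p, barR_mk p⟩

-- Both sides say that the reduced representative of `β` has all its coefficients in `{0, 2}`.
theorem barR_eq_zero_iff_two_mul_eq_zero (hm : h.Monic) (β : R4 h) :
    barR h β = 0 ↔ 2 * β = 0 := by
  obtain ⟨p, hp, rfl⟩ : ∃ p : Z4[X], p.degree < h.degree ∧ Ideal.Quotient.mk _ p = β := by
    obtain ⟨q, rfl⟩ := Ideal.Quotient.mk_surjective β
    refine ⟨q %ₘ h, degree_modByMonic_lt q hm, ?_⟩
    exact Ideal.Quotient.eq.mpr (Ideal.mem_span_singleton.mpr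
      ⟨-(q /ₘ h), by rw [modByMonic_eq_sub_mul_div q h]; ring⟩)
  have hpbar : (p.map bar).degree < (h.map bar).degree :=
    degree_map_le.trans_lt (by rwa [hm.degree_map])
  have hpp : (p + p).degree < h.degree := (degree_add_le p p).trans_lt (by rwa [max_self])
  rw [two_mul, ← map_add, barR_mk, Ideal.Quotient.eq_zero_iff_mem, Ideal.mem_span_singleton,
    Ideal.Quotient.eq_zero_iff_mem, Ideal.mem_span_singleton,
    (hm.map bar).dvd_iff_eq_zero_of_degree_lt hpbar, hm.dvd_iff_eq_zero_of_degree_lt hpp,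
    map_bar_eq_zero_iff_add_self_eq_zero]

theorem card_R4 (hm : h.Monic) : Nat.card (R4 h) = 4 ^ h.natDegree := by
  have e : R4 h ≃ (Fin _ → Z4) := (AdjoinRoot.powerBasis' hm).basis.equivFun.toEquiv
  rw [Nat.card_congr e, Nat.card_fun]
  simp

theorem card_R2 (hm : h.Monic) : Nat.card (R2 h) = 2 ^ h.natDegree := by
  have e : R2 h ≃ (Fin _ → Z2) := (AdjoinRoot.powerBasis' (hm.map bar)).basis.equivFun.toEquiv
  rw [Nat.card_congr e, Nat.card_fun]
  simp [hm.natDegree_map]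

theorem card_ker_barR (hm : h.Monic) : Nat.card {β : R4 h | barR h β = 0} = 2 ^ h.natDegree := by
  have := (barR h).toAddMonoidHom.ker.card_mul_index
  rw [AddSubgroup.index_ker,
    AddMonoidHom.range_eq_top_of_surjective (barR h).toAddMonoidHom barR_surjective,
    AddSubgroup.card_top, card_R2 hm, card_R4 hm, show (4 : ℕ) ^ _ = 2 ^ _ * 2 ^ _ from
      by rw [← mul_pow]; rfl] at this
  exact Nat.eq_of_mul_eq_mul_right (by positivity) this

end GaloisRing

section RowSpan

variable (h : Z4[X]) {ι α β : Type*} [Fintype ι]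

theorem smulStar_add (γ γ' : R4 h) (v : (α → R2 h) × (β → R4 h)) :
    smulStar h (γ + γ') v = smulStar h γ v + smulStar h γ' v := by
  ext <;> simp [smulStar, add_mul]

def rowCombination (rows : ι → (α → R2 h) × (β → R4 h)) :
    (ι → R4 h) →+ (α → R2 h) × (β → R4 h) :=
  AddMonoidHom.mk' (fun c => ∑ i, smulStar h (c i) (rows i)) fun c c' => by
    simp only [Pi.add_apply, smulStar_add, Finset.sum_add_distrib]

theorem rowCombination_apply (rows : ι → (α → R2 h) × (β → R4 h)) (c : ι → R4 h) :
    rowCombination h rows c = ∑ i, smulStar h (c i) (rows i) :=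
  rfl

theorem rowSpan_eq_range (rows : ι → (α → R2 h) × (β → R4 h)) :
    rowSpan h rows = Set.range (rowCombination h rows) := by
  ext v
  exact exists_congr fun c => eq_comm

theorem card_rowSpan_mul_card_ker (rows : ι → (α → R2 h) × (β → R4 h)) :
    Nat.card (rowSpan h rows) * Nat.card (rowCombination h rows).ker = Nat.card (ι → R4 h) := by
  rw [rowSpan_eq_range, ← AddMonoidHom.coe_range, SetLike.coe_sort_coe, ← AddSubgroup.index_ker,
    mul_comm, AddSubgroup.card_mul_index]

end RowSpan

section StandardForm

variable {h : Z4[X]} {r s k0 k1 k2 : ℕ}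
  (A01b : Matrix (Fin k0) (Fin (r - k0)) (R2 h)) (S : Matrix (Fin k1) (Fin (r - k0)) (R2 h))
  (T : Matrix (Fin k0) (Fin (s - k1 - k2)) (R4 h)) (A01 : Matrix (Fin k1) (Fin k2) (R4 h))
  (A02 : Matrix (Fin k1) (Fin (s - k1 - k2)) (R4 h))
  (A12 : Matrix (Fin k2) (Fin (s - k1 - k2)) (R4 h))

def stdKernelBlocks (h : Z4[X]) (k0 k1 k2 : ℕ) : Fin k0 ⊕ Fin k1 ⊕ Fin k2 → Set (R4 h) :=
  Sum.elim (fun _ => {β | barR h β = 0}) (Sum.elim (fun _ => {0}) fun _ => {β | barR h β = 0})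

local notation "G" => rowCombination h (stdGenRows h A01b S T A01 A02 A12)

theorem rowCombination_stdGenRows_fst_inl (c : Fin k0 ⊕ Fin k1 ⊕ Fin k2 → R4 h) (j : Fin k0) :
    (G c).1 (.inl j) = barR h (c (.inl j)) := by
  simp [rowCombination, stdGenRows, smulStar, Prod.fst_sum, Finset.sum_apply,
    Fintype.sum_sum_type]

theorem rowCombination_stdGenRows_snd_inl (c : Fin k0 ⊕ Fin k1 ⊕ Fin k2 → R4 h) (j : Fin k1) :
    (G c).2 (.inl j) = c (.inr (.inl j)) := by
  simp [rowCombination, stdGenRows, smulStar, Prod.snd_sum, Finset.sum_apply,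
    Fintype.sum_sum_type]

theorem rowCombination_stdGenRows_snd_inr_inl (c : Fin k0 ⊕ Fin k1 ⊕ Fin k2 → R4 h)
    (j : Fin k2) :
    (G c).2 (.inr (.inl j)) = ∑ i, c (.inr (.inl i)) * A01 i j + c (.inr (.inr j)) * 2 := by
  simp [rowCombination, stdGenRows, smulStar, Prod.snd_sum, Finset.sum_apply,
    Fintype.sum_sum_type]

theorem smulStar_stdGenRows_eq_zero (hm : h.Monic) {i : Fin k0 ⊕ Fin k1 ⊕ Fin k2} {γ : R4 h}
    (hγ : γ ∈ stdKernelBlocks h k0 k1 k2 i) :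
    smulStar h γ (stdGenRows h A01b S T A01 A02 A12 i) = 0 := by
  have hbar : barR h γ = 0 := by
    rcases i with _ | _ | _ <;> simp_all [stdKernelBlocks]
  have h2 : γ * 2 = 0 := by rw [mul_comm, ← barR_eq_zero_iff_two_mul_eq_zero hm, hbar]
  have h2x : ∀ x, γ * (2 * x) = 0 := fun x => by rw [← mul_assoc, h2, zero_mul]
  rcases i with i | i | i
  · ext (j | j | j) <;> simp [smulStar, stdGenRows, hbar, h2x]
  · obtain rfl : γ = 0 := hγ
    ext <;> simp [smulStar]
  · ext (j | j | j) <;> simp [smulStar, stdGenRows, hbar, h2, h2x]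

theorem rowCombination_stdGenRows_eq_zero_iff (hm : h.Monic)
    (c : Fin k0 ⊕ Fin k1 ⊕ Fin k2 → R4 h) :
    G c = 0 ↔ c ∈ Set.univ.pi (stdKernelBlocks h k0 k1 k2) := by
  refine ⟨fun hc => ?_, fun hc => (rowCombination_apply ..).trans <|
    Finset.sum_eq_zero fun i _ =>
      smulStar_stdGenRows_eq_zero A01b S T A01 A02 A12 hm (hc i (Set.mem_univ i))⟩
  have coord_fst (j) : (G c).1 j = 0 := congrFun (congrArg Prod.fst hc) j
  have coord_snd (j) : (G c).2 j = 0 := congrFun (congrArg Prod.snd hc) j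
  have hk1 (j : Fin k1) : c (.inr (.inl j)) = 0 :=
    (rowCombination_stdGenRows_snd_inl A01b S T A01 A02 A12 c j).symm.trans (coord_snd _)
  simp only [Set.mem_univ_pi, Sum.forall, stdKernelBlocks, Sum.elim_inl, Sum.elim_inr,
    Set.mem_singleton_iff]
  refine ⟨fun j => ?_, hk1, fun j => ?_⟩
  · exact (rowCombination_stdGenRows_fst_inl A01b S T A01 A02 A12 c j).symm.trans (coord_fst _)
  · have := coord_snd (.inr (.inl j))
    rw [rowCombination_stdGenRows_snd_inr_inl] at this
    simpa [hk1, mul_comm, barR_eq_zero_iff_two_mul_eq_zero hm] using this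

theorem card_ker_rowCombination_stdGenRows (hm : h.Monic) :
    Nat.card (G).ker = 2 ^ (h.natDegree * (k0 + k2)) := by
  have hker : ((G).ker : Set _) = Set.univ.pi (stdKernelBlocks h k0 k1 k2) :=
    Set.ext (rowCombination_stdGenRows_eq_zero_iff A01b S T A01 A02 A12 hm)
  rw [← SetLike.coe_sort_coe, hker, Nat.card_congr (Equiv.Set.univPi _), Nat.card_pi,
    Fintype.prod_sum_type, Fintype.prod_sum_type]
  simp [stdKernelBlocks, card_ker_barR hm, pow_mul, pow_add]

theorem card_rowSpan_stdGenRows (hm : h.Monic) :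
    Nat.card (rowSpan h (stdGenRows h A01b S T A01 A02 A12)) =
      2 ^ (h.natDegree * (k0 + 2 * k1 + k2)) := by
  have := card_rowSpan_mul_card_ker h (stdGenRows h A01b S T A01 A02 A12)
  rw [card_ker_rowCombination_stdGenRows A01b S T A01 A02 A12 hm, Nat.card_fun, card_R4 hm]
    at this
  refine Nat.eq_of_mul_eq_mul_right (by positivity) (this.trans ?_)
  simp only [Nat.card_eq_fintype_card, Fintype.card_sum, Fintype.card_fin, ← pow_add, ← pow_mul,
    show (4 : ℕ) = 2 ^ 2 from rfl]
  ring_nf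

end StandardForm

theorem card_of_type_code_general
    (t : ℕ) (h : Z4[X]) (hbp : BasicPrimitive h t)
    (r s k0 k1 k2 : ℕ)
    (C : Set ((Fin r → R2 h) × (Fin s → R4 h)))
    (htype : IsTypeCode h r s k0 k1 k2 C) :
    Nat.card C = 2 ^ (t * (k0 + 2 * k1 + k2)) := by
  obtain ⟨hm, rfl, -, -⟩ := hbp
  obtain ⟨A01b, S, T, A01, A02, A12, e2, e4, hC⟩ := htype
  have hreindex : Function.Injective
      fun v : (Fin r → R2 h) × (Fin s → R4 h) => (v.1 ∘ e2.symm, v.2 ∘ e4.symm) :=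
    e2.symm.surjective.injective_comp_right.prodMap e4.symm.surjective.injective_comp_right
  rw [← Nat.card_image_of_injective hreindex, hC, card_rowSpan_stdGenRows _ _ _ _ _ _ hm]

/-- A `Z₂Z₄[ξ]`-linear code of type `(r,s;k₀;k₁,k₂)`, where `ξ` is a
root of an irreducible polynomial of degree `t`, has exactly `2^{t(k₀+2k₁+k₂)}`
codewords. -/
theorem card_of_type_code
    (t : ℕ) (ht : 1 ≤ t) (h : Z4[X]) (hbp : BasicPrimitive h t)
    (r s k0 k1 k2 : ℕ) (hr : 0 < r) (hs : 0 < s)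
    (C : Set ((Fin r → R2 h) × (Fin s → R4 h))) (hC : IsZ2Z4Linear h C)
    (htype : IsTypeCode h r s k0 k1 k2 C) :
    Nat.card C = 2 ^ (t * (k0 + 2 * k1 + k2)) :=
  card_of_type_code_general t h hbp r s k0 k1 k2 C htype
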